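/- arXiv:0910.4858 — 2 statements merged into one kernel-verified Lean document; each statement's English description precedes it below -/
import Mathlib

section
/- Let $\mu \in \mathbb{R}$ and let $\Gamma(x) = \Gamma_+ \chi_{[0,\infty)}(x) + \Gamma_- \chi_{(-\infty,0)}(x)$ with $\Gamma_+ \neq \Gamma_-$. Then the only solution $\phi \in H^1(\mathbb{R}) \cap C^1(\mathbb{R})$ of the stationary equation $\phi'' + \mu\phi + \Gamma(x)|\phi|^2\phi = 0$ on $\mathbb{R}$ (with complex-valued $\phi$, the equation holding on each of $(-\infty,0)$ and $(0,\infty)$) is $\phi \equiv 0$. -/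
open MeasureTheory Complex

/-- The piecewise-constant nonlinearity coefficient. -/
noncomputable def GammaPW (Gp Gm : ℝ) (x : ℝ) : ℝ := if x < 0 then Gm else Gp

/-!
On each half-line the equation has the first integral `E = |φ'|² + μ|φ|² + (Γ±/2)|φ|⁴`.
Since `|φ|²` and `|φ'|²` are integrable, `|φ|² → 0` at infinity, so `|φ'|² → E`, which forces
`E = 0`. Both energies are continuous up to `0` and vanish there; subtracting them gives
`(Γ₊ - Γ₋)|φ(0)|⁴ = 0`, so `φ(0) = 0` and then `φ'(0) = 0`. Gronwall's inequality for
`|φ|² + |φ'|²` on each side of `0` then gives `φ ≡ 0`; the left half-line is reduced to the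
right one by the reflection `x ↦ -x`.
-/

open Set Filter Topology

theorem le_mul_exp_of_hasDerivAt_le_mul {g g' : ℝ → ℝ} {a b K : ℝ}
    (hcont : ContinuousOn g (Icc a b)) (hderiv : ∀ x ∈ Ioo a b, HasDerivAt g (g' x) x)
    (hbound : ∀ x ∈ Ioo a b, g' x ≤ K * g x) :
    ∀ x ∈ Icc a b, g x ≤ g a * Real.exp (K * (x - a)) := by
  have hexp (x : ℝ) : HasDerivAt (fun y => Real.exp (-K * y)) (Real.exp (-K * x) * -K) x := by
    simpa using ((hasDerivAt_id x).const_mul (-K)).exp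
  have hanti : AntitoneOn (fun x => g x * Real.exp (-K * x)) (Icc a b) := by
    refine antitoneOn_of_hasDerivWithinAt_nonpos (convex_Icc a b)
      (f' := fun x => g' x * Real.exp (-K * x) + g x * (Real.exp (-K * x) * -K))
      (hcont.mul (by fun_prop)) (fun x hx => ?_) (fun x hx => ?_)
    · rw [interior_Icc] at hx ⊢
      exact ((hderiv x hx).mul (hexp x)).hasDerivWithinAt
    · rw [interior_Icc] at hx
      have := hbound x hx
      have := Real.exp_pos (-K * x)
      nlinarith
  intro x hx
  have hax := hanti (left_mem_Icc.2 (hx.1.trans hx.2)) hx hx.1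
  calc g x = g x * Real.exp (-K * x) * Real.exp (K * x) := by
        rw [mul_assoc, ← Real.exp_add]; simp
    _ ≤ g a * Real.exp (-K * a) * Real.exp (K * x) := by gcongr
    _ = g a * Real.exp (K * (x - a)) := by
        rw [mul_assoc, ← Real.exp_add]; ring_nf

section NLS

variable {E : Type*} [NormedAddCommGroup E]

/-- The first integral of `u'' + μu + G‖u‖²u = 0`, evaluated at `(a, b) = (u, u')`. -/
noncomputable def nlsEnergy (μ G : ℝ) (a b : E) : ℝ :=
  ‖b‖ ^ 2 + μ * ‖a‖ ^ 2 + G / 2 * ‖a‖ ^ 4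

theorem eq_zero_of_nlsEnergy_eq_zero {μ G₁ G₂ : ℝ} (hG : G₁ ≠ G₂) {a b : E}
    (h₁ : nlsEnergy μ G₁ a b = 0) (h₂ : nlsEnergy μ G₂ a b = 0) : a = 0 ∧ b = 0 := by
  unfold nlsEnergy at h₁ h₂
  have ha : ‖a‖ ^ 4 = 0 := by
    have : (G₁ - G₂) * ‖a‖ ^ 4 = 0 := by linarith
    exact (mul_eq_zero.1 this).resolve_left (sub_ne_zero.2 hG)
  have ha : a = 0 := by simpa using ha
  subst ha
  simpa using h₁

variable [InnerProductSpace ℝ E]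

theorem hasDerivAt_nlsEnergy {μ G x : ℝ} {u v : ℝ → E} (hu : HasDerivAt u (v x) x)
    (hv : HasDerivAt v (-(μ + G * ‖u x‖ ^ 2) • u x) x) :
    HasDerivAt (fun y => nlsEnergy μ G (u y) (v y)) 0 x := by
  have hE : (fun y => nlsEnergy μ G (u y) (v y)) =
      fun y => ‖v y‖ ^ 2 + μ * ‖u y‖ ^ 2 + G / 2 * (‖u y‖ ^ 2) ^ 2 := by
    ext y; simp only [nlsEnergy]; ring
  have hA := hu.norm_sq
  rw [hE]
  refine ((hv.norm_sq.add (hA.const_mul μ)).add ((hA.pow 2).const_mul (G / 2))).congr_deriv ?_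
  simp only [inner_smul_right, real_inner_comm (u x)]
  ring

theorem two_mul_abs_real_inner_le (a b : E) : 2 * |inner ℝ a b| ≤ ‖a‖ ^ 2 + ‖b‖ ^ 2 := by
  nlinarith [abs_real_inner_le_norm a b, two_mul_le_add_sq ‖a‖ ‖b‖]

structure IsNLSSolutionOnIoi (μ G : ℝ) (u v : ℝ → E) : Prop where
  continuousOn_u : ContinuousOn u (Ici 0)
  continuousOn_v : ContinuousOn v (Ici 0)
  hasDerivAt_u : ∀ x, 0 < x → HasDerivAt u (v x) x
  hasDerivAt_v : ∀ x, 0 < x → HasDerivAt v (-(μ + G * ‖u x‖ ^ 2) • u x) x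

namespace IsNLSSolutionOnIoi

variable {μ G : ℝ} {u v : ℝ → E}

theorem nlsEnergy_eq (h : IsNLSSolutionOnIoi μ G u v) {x : ℝ} (hx : 0 ≤ x) :
    nlsEnergy μ G (u x) (v x) = nlsEnergy μ G (u 0) (v 0) := by
  rcases hx.eq_or_lt with rfl | hx
  · rfl
  have hcont : ContinuousOn (fun y => nlsEnergy μ G (u y) (v y)) (Icc 0 x) := by
    have := h.continuousOn_u.mono (Icc_subset_Ici_self : Icc 0 x ⊆ Ici 0)
    have := h.continuousOn_v.mono (Icc_subset_Ici_self : Icc 0 x ⊆ Ici 0)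
    unfold nlsEnergy; fun_prop
  obtain ⟨c, hc, hslope⟩ := exists_hasDerivAt_eq_slope _ (fun _ => (0 : ℝ)) hx hcont
    fun y hy => hasDerivAt_nlsEnergy (h.hasDerivAt_u y hy.1) (h.hasDerivAt_v y hy.1)
  rw [eq_comm, div_eq_zero_iff, sub_eq_zero] at hslope
  exact hslope.resolve_right (by linarith)

theorem tendsto_norm_sq_atTop (h : IsNLSSolutionOnIoi μ G u v)
    (hu : IntegrableOn (‖u ·‖ ^ 2) (Ioi 0)) (hv : IntegrableOn (‖v ·‖ ^ 2) (Ioi 0)) :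
    Tendsto (‖u ·‖ ^ 2) atTop (𝓝 0) := by
  refine tendsto_zero_of_hasDerivAt_of_integrableOn_Ioi
    (fun x hx => (h.hasDerivAt_u x hx).norm_sq) ?_ hu
  refine (hu.add hv).mono' ?_ (ae_restrict_of_forall_mem measurableSet_Ioi fun x _ => ?_)
  · have := h.continuousOn_u.mono Ioi_subset_Ici_self
    have := h.continuousOn_v.mono Ioi_subset_Ici_self
    exact ContinuousOn.aestronglyMeasurable (by fun_prop) measurableSet_Ioi
  · rw [Real.norm_eq_abs, abs_mul, abs_two]
    exact two_mul_abs_real_inner_le (u x) (v x)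

/-- The energy vanishes because it is constant on `[0, ∞)`, while `‖u‖² → 0` forces `‖v‖²` to
converge to it, and an integrable function can only converge to `0`. -/
theorem nlsEnergy_eq_zero (h : IsNLSSolutionOnIoi μ G u v)
    (hu : IntegrableOn (‖u ·‖ ^ 2) (Ioi 0)) (hv : IntegrableOn (‖v ·‖ ^ 2) (Ioi 0)) :
    nlsEnergy μ G (u 0) (v 0) = 0 := by
  have hA := h.tendsto_norm_sq_atTop hu hv
  have hB : Tendsto (‖v ·‖ ^ 2) atTop (𝓝 (nlsEnergy μ G (u 0) (v 0))) := by
    have := ((tendsto_const_nhds (x := nlsEnergy μ G (u 0) (v 0))).sub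
      (hA.const_mul μ)).sub ((hA.pow 2).const_mul (G / 2))
    simp only [mul_zero, sub_zero, ne_eq, OfNat.ofNat_ne_zero, not_false_eq_true,
      zero_pow] at this
    refine this.congr' ((eventually_ge_atTop 0).mono fun x hx => ?_)
    rw [← h.nlsEnergy_eq hx, nlsEnergy]
    ring
  refine IntegrableAtFilter.eq_zero_of_tendsto ⟨Ioi 0, Ioi_mem_atTop 0, hv⟩ (fun s hs => ?_) hB
  obtain ⟨b, hb⟩ := mem_atTop_sets.1 hs
  exact top_le_iff.1 (Real.volume_Ici (a := b) ▸ measure_mono hb)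

theorem hasDerivAt_norm_sq_add_norm_sq_le (h : IsNLSSolutionOnIoi μ G u v) {x : ℝ} (hx : 0 < x) :
    ∃ d, HasDerivAt (fun y => ‖u y‖ ^ 2 + ‖v y‖ ^ 2) d x ∧
      d ≤ |1 - μ - G * ‖u x‖ ^ 2| * (‖u x‖ ^ 2 + ‖v x‖ ^ 2) := by
  refine ⟨_, (h.hasDerivAt_u x hx).norm_sq.add (h.hasDerivAt_v x hx).norm_sq, ?_⟩
  calc 2 * inner ℝ (u x) (v x) + 2 * inner ℝ (v x) (-(μ + G * ‖u x‖ ^ 2) • u x)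
      = (1 - μ - G * ‖u x‖ ^ 2) * (2 * inner ℝ (u x) (v x)) := by
        rw [inner_smul_right, real_inner_comm (u x)]; ring
    _ ≤ |1 - μ - G * ‖u x‖ ^ 2| * (2 * |inner ℝ (u x) (v x)|) :=
        (le_abs_self _).trans_eq (by rw [abs_mul, abs_mul, abs_two])
    _ ≤ |1 - μ - G * ‖u x‖ ^ 2| * (‖u x‖ ^ 2 + ‖v x‖ ^ 2) := by
        gcongr; exact two_mul_abs_real_inner_le _ _

/-- Gronwall applied to `‖u‖² + ‖v‖²`, with the nonlinearity bounded on `[0, x]`. -/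
theorem eq_zero_of_initial_eq_zero (h : IsNLSSolutionOnIoi μ G u v) (hu0 : u 0 = 0)
    (hv0 : v 0 = 0) {x : ℝ} (hx : 0 ≤ x) : u x = 0 := by
  have hcont : ContinuousOn (fun y => ‖u y‖ ^ 2 + ‖v y‖ ^ 2) (Icc 0 x) := by
    have := h.continuousOn_u.mono (Icc_subset_Ici_self : Icc 0 x ⊆ Ici 0)
    have := h.continuousOn_v.mono (Icc_subset_Ici_self : Icc 0 x ⊆ Ici 0)
    fun_prop
  obtain ⟨M, hM⟩ := isCompact_Icc.exists_bound_of_continuousOn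
    ((h.continuousOn_u.mono Icc_subset_Ici_self).norm.pow 2 : ContinuousOn (‖u ·‖ ^ 2) (Icc 0 x))
  choose! d hd hdle using fun y (hy : y ∈ Ioo 0 x) => h.hasDerivAt_norm_sq_add_norm_sq_le hy.1
  have hbound := le_mul_exp_of_hasDerivAt_le_mul (K := 1 + |μ| + |G| * M) hcont hd
    (fun y hy => ?_) x (right_mem_Icc.2 hx)
  · simp only [hu0, hv0, norm_zero] at hbound
    have : ‖u x‖ ^ 2 = 0 := by nlinarith [sq_nonneg ‖u x‖, sq_nonneg ‖v x‖]
    simpa using this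
  · refine (hdle y hy).trans (mul_le_mul_of_nonneg_right ?_ (by positivity))
    have hMy : ‖u y‖ ^ 2 ≤ M := by simpa using hM y (Ioo_subset_Icc_self hy)
    calc |1 - μ - G * ‖u y‖ ^ 2| ≤ |1 - μ| + |G * ‖u y‖ ^ 2| := abs_sub _ _
      _ ≤ 1 + |μ| + |G| * M := by
        rw [abs_mul, abs_of_nonneg (by positivity : (0 : ℝ) ≤ ‖u y‖ ^ 2)]
        gcongr
        exact (abs_sub _ _).trans (by simp)

end IsNLSSolutionOnIoi

theorem isNLSSolutionOnIoi_comp_neg {μ G : ℝ} {u v : ℝ → E} (hu : ContinuousOn u (Iic 0))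
    (hv : ContinuousOn v (Iic 0)) (hu' : ∀ x, x < 0 → HasDerivAt u (v x) x)
    (hv' : ∀ x, x < 0 → HasDerivAt v (-(μ + G * ‖u x‖ ^ 2) • u x) x) :
    IsNLSSolutionOnIoi μ G (fun x => u (-x)) (fun x => -v (-x)) where
  continuousOn_u := hu.comp continuous_neg.continuousOn fun x hx => by simpa using hx
  continuousOn_v := (hv.comp continuous_neg.continuousOn fun x hx => by simpa using hx).neg
  hasDerivAt_u x hx :=
    ((hu' (-x) (neg_neg_of_pos hx)).scomp x (hasDerivAt_neg x)).congr_deriv (neg_one_smul ℝ _)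
  hasDerivAt_v x hx :=
    ((hv' (-x) (neg_neg_of_pos hx)).scomp x (hasDerivAt_neg x)).neg.congr_deriv (by simp)

end NLS

/-- For `Γ(x) = Γ₊ χ_[0,∞) + Γ₋ χ_(-∞,0)` with `Γ₊ ≠ Γ₋`, the only
`H¹(ℝ) ∩ C¹(ℝ)` solution of `φ'' + μφ + Γ(x)|φ|²φ = 0` (the equation holding away
from `0`) is `φ ≡ 0`. -/
theorem stmt0 (μ Gp Gm : ℝ) (hG : Gp ≠ Gm) (φ : ℝ → ℂ)
    (hC1 : ContDiff ℝ 1 φ)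
    (hH1 : MemLp φ 2 (volume : Measure ℝ) ∧ MemLp (deriv φ) 2 (volume : Measure ℝ))
    (hode : ∀ x : ℝ, x ≠ 0 →
      HasDerivAt (deriv φ)
        (-((μ : ℂ) * φ x + (GammaPW Gp Gm x : ℝ) * (‖φ x‖ ^ 2 : ℝ) * φ x)) x) :
    φ = 0 := by
  have hφ : ∀ x, HasDerivAt φ (deriv φ x) x :=
    fun x => (hC1.differentiable one_ne_zero x).hasDerivAt
  have hφ' : Continuous (deriv φ) := hC1.continuous_deriv le_rfl
  have hode' (x : ℝ) (hx : x ≠ 0) :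
      HasDerivAt (deriv φ) (-(μ + GammaPW Gp Gm x * ‖φ x‖ ^ 2) • φ x) x := by
    convert hode x hx using 1
    rw [Complex.real_smul]
    push_cast
    ring
  have hright : IsNLSSolutionOnIoi μ Gp φ (deriv φ) :=
    ⟨hC1.continuous.continuousOn, hφ'.continuousOn, fun x _ => hφ x, fun x hx => by
      simpa [GammaPW, not_lt.2 hx.le] using hode' x hx.ne'⟩
  have hleft : IsNLSSolutionOnIoi μ Gm (fun x => φ (-x)) (fun x => -deriv φ (-x)) :=
    isNLSSolutionOnIoi_comp_neg hC1.continuous.continuousOn hφ'.continuousOn (fun x _ => hφ x)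
      fun x hx => by simpa [GammaPW, hx] using hode' x hx.ne
  have hu : Integrable (‖φ ·‖ ^ 2) := (memLp_two_iff_integrable_sq_norm hH1.1.1).1 hH1.1
  have hv : Integrable (‖deriv φ ·‖ ^ 2) := (memLp_two_iff_integrable_sq_norm hH1.2.1).1 hH1.2
  have hEp := hright.nlsEnergy_eq_zero hu.integrableOn hv.integrableOn
  have hEm := hleft.nlsEnergy_eq_zero hu.comp_neg.integrableOn
    (by simpa using hv.comp_neg.integrableOn)
  obtain ⟨hφ0, hφ'0⟩ := eq_zero_of_nlsEnergy_eq_zero hG hEp (by simpa [nlsEnergy] using hEm)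
  funext x
  rcases le_total 0 x with hx | hx
  · exact hright.eq_zero_of_initial_eq_zero hφ0 hφ'0 hx
  · simpa using hleft.eq_zero_of_initial_eq_zero (by simpa using hφ0) (by simpa using hφ'0)
      (neg_nonneg.2 hx)
end

section
/- Let $\phi_s \in L^\infty(\mathbb{R})$ be real-valued, $\Gamma \in L^\infty(\mathbb{R})$, $V, \mu_s$ real, and suppose $\lambda \in \mathbb{C}$ is an eigenvalue of the linearized operator, i.e. there exist $a, b \in H^2(\mathbb{R})$, not both zero, with $\lambda a = L_- b$ and $\lambda b = -L_+ a$, where $L_- = -\partial_x^2 + V(x) - \mu_s - \Gamma(x)\phi_s^2(x)$ and $L_+ = -\partial_x^2 + V(x) - \mu_s - 3\Gamma(x)\phi_s^2(x)$. Then $|\mathrm{Re}(\lambda)| \leq \|\Gamma\|_\infty \|\phi_s\|_\infty^2$. -/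
/-!
Multiply `λ a = L₋ b` by `ā`, the conjugate of `λ b = -L₊ a` by `b`, and add. The kinetic and
`V - μ_s` terms combine into the derivative of the Wronskian-type expression `ā' b - ā b'`, and
the `Γ φ_s²` terms leave `2 Γ φ_s² ā b`. The expression is integrable since `a, a', b, b' ∈ L²`,
and so is its derivative by the identity itself, so the derivative integrates to zero. Hence
`λ ‖a‖² + λ̄ ‖b‖² = 2 ∫ Γ φ_s² ā b`, and taking real parts and using `2|ā b| ≤ |a|² + |b|²` gives
`|Re λ| (‖a‖² + ‖b‖²) ≤ ‖Γ‖_∞ ‖φ_s‖_∞² (‖a‖² + ‖b‖²)`.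
-/

open MeasureTheory Complex ComplexConjugate

/-- The operator `L₋ = -∂ₓ² + V - μ_s - Γ φ_s²` applied to `b`. -/
noncomputable def Lminus (V Γ φs : ℝ → ℝ) (μs : ℝ) (b : ℝ → ℂ) (x : ℝ) : ℂ :=
  -deriv (deriv b) x + ((V x - μs - Γ x * φs x ^ 2 : ℝ) : ℂ) * b x

/-- The operator `L₊ = -∂ₓ² + V - μ_s - 3Γ φ_s²` applied to `a`. -/
noncomputable def Lplus (V Γ φs : ℝ → ℝ) (μs : ℝ) (a : ℝ → ℂ) (x : ℝ) : ℂ :=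
  -deriv (deriv a) x + ((V x - μs - 3 * Γ x * φs x ^ 2 : ℝ) : ℂ) * a x

section Integrals

variable {α : Type*} [MeasurableSpace α] {μ : Measure α}

lemma ae_norm_le_toReal_eLpNorm_top {E : Type*} [NormedAddCommGroup E] {f : α → E}
    (hf : MemLp f ⊤ μ) : ∀ᵐ x ∂μ, ‖f x‖ ≤ (eLpNorm f ⊤ μ).toReal := by
  filter_upwards [ae_le_eLpNormEssSup (f := f) (μ := μ)] with x hx
  rw [← toReal_enorm, eLpNorm_exponent_top]
  exact ENNReal.toReal_mono (eLpNorm_exponent_top (f := f) ▸ hf.2.ne) hx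

lemma integrable_conj_mul {f g : α → ℂ} (hf : MemLp f 2 μ) (hg : MemLp g 2 μ) :
    Integrable (fun x => conj (f x) * g x) μ :=
  hf.star.integrable_mul hg

lemma integral_conj_mul_self (f : α → ℂ) :
    ∫ x, conj (f x) * f x ∂μ = ((∫ x, ‖f x‖ ^ 2 ∂μ : ℝ) : ℂ) := by
  simp_rw [conj_mul', ← ofReal_pow]
  exact integral_ofReal

lemma integral_norm_sq_pos [TopologicalSpace α] [OpensMeasurableSpace α] [μ.IsOpenPosMeasure]
    {E : Type*} [NormedAddCommGroup E] {f : α → E} (hc : Continuous f) (hf : MemLp f 2 μ)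
    (hne : f ≠ 0) : 0 < ∫ x, ‖f x‖ ^ 2 ∂μ := by
  rw [integral_pos_iff_support_of_nonneg (fun x => sq_nonneg _)
    ((memLp_two_iff_integrable_sq_norm hf.1).1 hf)]
  have hsupp : Function.support (fun x => ‖f x‖ ^ 2) = Function.support f := by
    ext x; simp
  obtain ⟨x, hx⟩ := Function.ne_iff.1 hne
  rw [hsupp]
  exact (isOpen_ne_fun hc continuous_const).measure_pos μ ⟨x, hx⟩

section Potential

variable {w : α → ℝ} {M : ℝ} {a b : α → ℂ}

lemma integrable_ofReal_mul_conj_mul (hwm : AEStronglyMeasurable w μ)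
    (hw : ∀ᵐ x ∂μ, |w x| ≤ M) (ha : MemLp a 2 μ) (hb : MemLp b 2 μ) :
    Integrable (fun x => (w x : ℂ) * (conj (a x) * b x)) μ :=
  (integrable_conj_mul ha hb).bdd_mul (continuous_ofReal.comp_aestronglyMeasurable hwm)
    (by simpa only [Function.comp_apply, norm_real, Real.norm_eq_abs] using hw)

lemma norm_integral_ofReal_mul_conj_mul_le (hw : ∀ᵐ x ∂μ, |w x| ≤ M)
    (ha : MemLp a 2 μ) (hb : MemLp b 2 μ) :
    ‖∫ x, (w x : ℂ) * (conj (a x) * b x) ∂μ‖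
      ≤ M / 2 * (∫ x, ‖a x‖ ^ 2 ∂μ + ∫ x, ‖b x‖ ^ 2 ∂μ) := by
  have ha2 := (memLp_two_iff_integrable_sq_norm ha.1).1 ha
  have hb2 := (memLp_two_iff_integrable_sq_norm hb.1).1 hb
  rw [← integral_add ha2 hb2, ← integral_const_mul]
  refine norm_integral_le_of_norm_le ((ha2.add hb2).const_mul _) ?_
  filter_upwards [hw] with x hx
  have hM : 0 ≤ M := (abs_nonneg _).trans hx
  rw [norm_mul, norm_mul, norm_real, norm_conj, Real.norm_eq_abs]
  calc |w x| * (‖a x‖ * ‖b x‖) ≤ M * ((‖a x‖ ^ 2 + ‖b x‖ ^ 2) / 2) := by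
        gcongr
        nlinarith [sq_nonneg (‖a x‖ - ‖b x‖)]
    _ = M / 2 * (‖a x‖ ^ 2 + ‖b x‖ ^ 2) := by ring

end Potential

end Integrals

section Eigenvalue

variable {V Γ φs : ℝ → ℝ} {μs : ℝ} {lam : ℂ} {a b : ℝ → ℂ}

lemma hasDerivAt_conj_deriv_mul_sub_conj_mul_deriv (ha : Differentiable ℝ a)
    (ha' : Differentiable ℝ (deriv a)) (hb : Differentiable ℝ b) (hb' : Differentiable ℝ (deriv b))
    (x : ℝ) :
    HasDerivAt (fun y => conj (deriv a y) * b y - conj (a y) * deriv b y)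
      (b x * conj (deriv (deriv a) x) - conj (a x) * deriv (deriv b) x) x := by
  have h := ((ha' x).hasDerivAt.star.mul (hb x).hasDerivAt).sub
    ((ha x).hasDerivAt.star.mul (hb' x).hasDerivAt)
  exact h.congr_deriv (by simp only [RCLike.star_def]; ring)

lemma eigen_pointwise_identity (x : ℝ) (heq1 : lam * a x = Lminus V Γ φs μs b x)
    (heq2 : lam * b x = -Lplus V Γ φs μs a x) :
    lam * (conj (a x) * a x) + conj lam * (conj (b x) * b x)
      = (b x * conj (deriv (deriv a) x) - conj (a x) * deriv (deriv b) x)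
        + 2 * (((Γ x * φs x ^ 2 : ℝ) : ℂ) * (conj (a x) * b x)) := by
  have heq2' := congrArg conj heq2
  simp only [Lminus, Lplus, map_mul, map_add, map_neg, conj_ofReal] at heq1 heq2'
  push_cast at heq1 heq2' ⊢
  linear_combination conj (a x) * heq1 + b x * heq2'

lemma eigen_integral_identity (ha : ContDiff ℝ 2 a) (hb : ContDiff ℝ 2 b)
    (haL2 : MemLp a 2 volume) (haL2' : MemLp (deriv a) 2 volume)
    (hbL2 : MemLp b 2 volume) (hbL2' : MemLp (deriv b) 2 volume)
    (hpot : Integrable (fun x => ((Γ x * φs x ^ 2 : ℝ) : ℂ) * (conj (a x) * b x)))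
    (heq1 : ∀ x, lam * a x = Lminus V Γ φs μs b x)
    (heq2 : ∀ x, lam * b x = -Lplus V Γ φs μs a x) :
    lam * ((∫ x, ‖a x‖ ^ 2 : ℝ) : ℂ) + conj lam * ((∫ x, ‖b x‖ ^ 2 : ℝ) : ℂ)
      = 2 * ∫ x, ((Γ x * φs x ^ 2 : ℝ) : ℂ) * (conj (a x) * b x) := by
  have hdiff : ∀ f : ℝ → ℂ, ContDiff ℝ 2 f → Differentiable ℝ f ∧ Differentiable ℝ (deriv f) :=
    fun f hf => ⟨hf.differentiable two_ne_zero,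
      (hf.iterate_deriv' 1 1).differentiable one_ne_zero⟩
  have hkey := fun x => eigen_pointwise_identity x (heq1 x) (heq2 x)
  have iaa := integrable_conj_mul haL2 haL2
  have ibb := integrable_conj_mul hbL2 hbL2
  have iLHS := (iaa.const_mul lam).add (ibb.const_mul (conj lam))
  have iW' : Integrable (fun x =>
      b x * conj (deriv (deriv a) x) - conj (a x) * deriv (deriv b) x) :=
    (iLHS.sub (hpot.const_mul 2)).congr (Filter.Eventually.of_forall fun x => by
      simp only [Pi.add_apply, Pi.sub_apply]; linear_combination hkey x)
  have hW : ∫ x, (b x * conj (deriv (deriv a) x) - conj (a x) * deriv (deriv b) x) = 0 :=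
    integral_eq_zero_of_hasDerivAt_of_integrable
      (hasDerivAt_conj_deriv_mul_sub_conj_mul_deriv (hdiff a ha).1 (hdiff a ha).2
        (hdiff b hb).1 (hdiff b hb).2) iW'
      ((integrable_conj_mul haL2' hbL2).sub (integrable_conj_mul haL2 hbL2'))
  rw [← integral_conj_mul_self, ← integral_conj_mul_self, ← integral_const_mul,
    ← integral_const_mul, ← integral_add (iaa.const_mul _) (ibb.const_mul _),
    integral_congr_ae (Filter.Eventually.of_forall hkey), integral_add iW' (hpot.const_mul 2),
    hW, integral_const_mul, zero_add]

end Eigenvalue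

theorem stmt3_general (V Γ φs : ℝ → ℝ) (μs : ℝ) (lam : ℂ) (a b : ℝ → ℂ)
    (hφs : MemLp φs ⊤ (volume : Measure ℝ)) (hΓ : MemLp Γ ⊤ (volume : Measure ℝ))
    (ha : ContDiff ℝ 2 a) (hb : ContDiff ℝ 2 b)
    (haL2 : MemLp a 2 (volume : Measure ℝ)) (haL2' : MemLp (deriv a) 2 (volume : Measure ℝ))
    (hbL2 : MemLp b 2 (volume : Measure ℝ)) (hbL2' : MemLp (deriv b) 2 (volume : Measure ℝ))
    (hnz : a ≠ 0 ∨ b ≠ 0)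
    (heq1 : ∀ x, lam * a x = Lminus V Γ φs μs b x)
    (heq2 : ∀ x, lam * b x = -Lplus V Γ φs μs a x) :
    |lam.re| ≤ (eLpNorm Γ ⊤ (volume : Measure ℝ)).toReal *
      ((eLpNorm φs ⊤ (volume : Measure ℝ)).toReal) ^ 2 := by
  set M := (eLpNorm Γ ⊤ (volume : Measure ℝ)).toReal *
    ((eLpNorm φs ⊤ (volume : Measure ℝ)).toReal) ^ 2
  set A := ∫ x, ‖a x‖ ^ 2
  set B := ∫ x, ‖b x‖ ^ 2
  set I := ∫ x, ((Γ x * φs x ^ 2 : ℝ) : ℂ) * (conj (a x) * b x)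
  have hw : ∀ᵐ x, |Γ x * φs x ^ 2| ≤ M := by
    filter_upwards [ae_norm_le_toReal_eLpNorm_top hΓ, ae_norm_le_toReal_eLpNorm_top hφs]
      with x hΓx hφx
    rw [abs_mul, abs_pow]
    exact mul_le_mul hΓx (pow_le_pow_left₀ (abs_nonneg _) hφx 2) (by positivity)
      ENNReal.toReal_nonneg
  have hpot := integrable_ofReal_mul_conj_mul
    (hΓ.1.mul (hφs.1.pow 2) : AEStronglyMeasurable (fun x => Γ x * φs x ^ 2)) hw haL2 hbL2
  have hre : lam.re * (A + B) = 2 * I.re := by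
    have h := congrArg re (eigen_integral_identity ha hb haL2 haL2' hbL2 hbL2' hpot heq1 heq2)
    simp only [add_re, mul_re, conj_re, conj_im, ofReal_re, ofReal_im, re_ofNat, im_ofNat,
      mul_zero, zero_mul, sub_zero] at h
    linarith
  have hI : ‖I‖ ≤ M / 2 * (A + B) := norm_integral_ofReal_mul_conj_mul_le hw haL2 hbL2
  have hS : 0 < A + B := by
    rcases hnz with h | h
    · exact add_pos_of_pos_of_nonneg (integral_norm_sq_pos ha.continuous haL2 h)
        (integral_nonneg fun _ => sq_nonneg _)
    · exact add_pos_of_nonneg_of_pos (integral_nonneg fun _ => sq_nonneg _)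
        (integral_norm_sq_pos hb.continuous hbL2 h)
  rw [← mul_le_mul_iff_of_pos_right hS]
  calc |lam.re| * (A + B) = 2 * |I.re| := by
        rw [← abs_of_pos hS, ← abs_mul, hre, abs_mul, abs_two]
    _ ≤ 2 * ‖I‖ := by gcongr; exact abs_re_le_norm I
    _ ≤ M * (A + B) := by linarith

/-- eigenvalues `λ` of the linearized operator satisfy
`|Re λ| ≤ ‖Γ‖_∞ ‖φ_s‖_∞²`. -/
theorem stmt3 (V Γ φs : ℝ → ℝ) (μs : ℝ) (lam : ℂ) (a b : ℝ → ℂ)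
    (hφs : MemLp φs ⊤ (volume : Measure ℝ)) (hΓ : MemLp Γ ⊤ (volume : Measure ℝ))
    (ha : ContDiff ℝ 2 a) (hb : ContDiff ℝ 2 b)
    (haL2 : MemLp a 2 (volume : Measure ℝ)) (haL2' : MemLp (deriv a) 2 (volume : Measure ℝ))
    (haL2'' : MemLp (deriv (deriv a)) 2 (volume : Measure ℝ))
    (hbL2 : MemLp b 2 (volume : Measure ℝ)) (hbL2' : MemLp (deriv b) 2 (volume : Measure ℝ))
    (hbL2'' : MemLp (deriv (deriv b)) 2 (volume : Measure ℝ))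
    (hnz : a ≠ 0 ∨ b ≠ 0)
    (heq1 : ∀ x, lam * a x = Lminus V Γ φs μs b x)
    (heq2 : ∀ x, lam * b x = -Lplus V Γ φs μs a x) :
    |lam.re| ≤ (eLpNorm Γ ⊤ (volume : Measure ℝ)).toReal *
      ((eLpNorm φs ⊤ (volume : Measure ℝ)).toReal) ^ 2 :=
  stmt3_general V Γ φs μs lam a b hφs hΓ ha hb haL2 haL2' hbL2 hbL2' hnz heq1 heq2
end
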